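/- arXiv:2111.02471 — 2 statements merged into one kernel-verified Lean document; each statement's English description precedes it below -/
import Mathlib

section
/- Let (G, w) be an edge-weighted simple graph on a finite type V and let v ∈ V. Then the restriction map φ : S_G → S_{G_v}, φ(g) = g restricted to V \ {v}, is a well-defined surjective ℤ-module homomorphism, and its kernel is exactly { g ∈ S_G : g(u) = 0 for all u ≠ v }. -/
/-- An integer spline on the edge-weighted graph `(G, w)`: a vertex labeling `g : V → ℤ` such
that for every edge `{u, x}` of `G`, the weight `w {u, x}` divides `g u - g x` in `ℤ`. -/
def IsSpline {V : Type*} (G : SimpleGraph V) (w : Sym2 V → ℕ) (g : V → ℤ) : Prop :=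
  ∀ u x : V, G.Adj u x → (w s(u, x) : ℤ) ∣ g u - g x

/-- The ℤ-module of integer splines on `(G, w)`, as a submodule of `V → ℤ`. -/
def splineSubmodule {V : Type*} (G : SimpleGraph V) (w : Sym2 V → ℕ) :
    Submodule ℤ (V → ℤ) where
  carrier := {g | IsSpline G w g}
  add_mem' := by
    intro a b ha hb u x hux
    simpa [sub_add_sub_comm] using dvd_add (ha u x hux) (hb u x hux)
  zero_mem' := by intro u x hux; simp
  smul_mem' := by
    intro c g hg u x hux
    simpa [mul_sub] using (hg u x hux).mul_left c

/-- The star-clique operation at `v`: delete `v` and all edges at `v`, and join every pair of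
distinct former neighbors of `v` by an edge (keeping all edges of `G` not incident to `v`). -/
def starClique {V : Type*} (G : SimpleGraph V) (v : V) :
    SimpleGraph {u : V // u ≠ v} where
  Adj u x := u ≠ x ∧ (G.Adj ↑u ↑x ∨ (G.Adj ↑u v ∧ G.Adj ↑x v))
  symm := ⟨by
    rintro u x ⟨h1, h2⟩
    refine ⟨h1.symm, ?_⟩
    rcases h2 with h | ⟨ha, hb⟩
    · exact Or.inl h.symm
    · exact Or.inr ⟨hb, ha⟩⟩
  loopless := ⟨fun u h => h.1 rfl⟩

instance {V : Type*} [DecidableEq V] (G : SimpleGraph V) [DecidableRel G.Adj] (v : V) :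
    DecidableRel (starClique G v).Adj :=
  fun u x => decidable_of_iff (u ≠ x ∧ (G.Adj ↑u ↑x ∨ (G.Adj ↑u v ∧ G.Adj ↑x v))) Iff.rfl

/-- The edge weights of the collapsed graph `(G_v, w_v)`: for distinct `u, x ≠ v`, the weight is
`w {u, x}` if `u, x` are adjacent in `G` but not both adjacent to `v`;
`gcd (w {u, v}) (w {x, v})` if `u, x` are not adjacent in `G` but both adjacent to `v`; and
`lcm (w {u, x}) (gcd (w {u, v}) (w {x, v}))` if both. -/
def collapseWeight {V : Type*} (G : SimpleGraph V) [DecidableRel G.Adj]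
    (w : Sym2 V → ℕ) (v : V) : Sym2 {u : V // u ≠ v} → ℕ :=
  Sym2.lift ⟨fun u x =>
    if G.Adj ↑u ↑x then
      if G.Adj ↑u v ∧ G.Adj ↑x v then
        Nat.lcm (w s(↑u, ↑x)) (Nat.gcd (w s(↑u, v)) (w s(↑x, v)))
      else w s(↑u, ↑x)
    else Nat.gcd (w s(↑u, v)) (w s(↑x, v)),
    by
      intro u x
      have hadj : G.Adj (↑u : V) ↑x ↔ G.Adj (↑x : V) ↑u := G.adj_comm _ _
      have hs : s((↑u : V), (↑x : V)) = s((↑x : V), (↑u : V)) := Sym2.eq_swap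
      have hg : Nat.gcd (w s((↑u : V), v)) (w s((↑x : V), v)) =
          Nat.gcd (w s((↑x : V), v)) (w s((↑u : V), v)) := Nat.gcd_comm _ _
      have ha : (G.Adj (↑u : V) v ∧ G.Adj (↑x : V) v) ↔ (G.Adj (↑x : V) v ∧ G.Adj (↑u : V) v) :=
        and_comm
      dsimp only
      by_cases h1 : G.Adj (↑u : V) ↑x
      · by_cases h2 : G.Adj (↑u : V) v ∧ G.Adj (↑x : V) v
        · rw [if_pos h1, if_pos (hadj.mp h1), if_pos h2, if_pos (ha.mp h2), hs, hg]
        · rw [if_pos h1, if_pos (hadj.mp h1), if_neg h2, if_neg (fun hc => h2 (ha.mpr hc)), hs]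
      · rw [if_neg h1, if_neg (fun hc => h1 (hadj.mpr hc)), hg]⟩

/-!
Restricting a spline to `V \ {v}` gives a spline of the collapsed graph: for `u, x` adjacent to
`v`, `g u - g x = (g u - g v) - (g x - g v)` is divisible by `gcd (w {u, v}) (w {x, v})`, and an
lcm of two divisors of a number divides it. Conversely, a spline `g₀` of the collapsed graph
extends to `v` as soon as some `z` satisfies `z ≡ g₀ u [ZMOD w {u, v}]` for every neighbour `u`
of `v`. The clique edges among these neighbours say precisely that these congruences are pairwise
compatible, and over `ℤ` pairwise compatibility suffices (Chinese remainder theorem for arbitrary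
moduli), because divisibility on `ℕ` is a distributive lattice:
`gcd (lcm a b) c = lcm (gcd a c) (gcd b c)`.
-/

theorem Nat.gcd_lcm_dvd_lcm_gcd (a b c : ℕ) :
    Nat.gcd (Nat.lcm a b) c ∣ Nat.lcm (Nat.gcd a c) (Nat.gcd b c) := by
  rcases eq_or_ne a 0 with rfl | ha
  · simp [Nat.dvd_lcm_left]
  rcases eq_or_ne b 0 with rfl | hb
  · simp [Nat.dvd_lcm_right]
  rcases eq_or_ne c 0 with rfl | hc
  · simp
  have hab := Nat.lcm_ne_zero ha hb
  rw [← Nat.factorization_le_iff_dvd (Nat.gcd_ne_zero_left hab)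
      (Nat.lcm_ne_zero (Nat.gcd_ne_zero_left ha) (Nat.gcd_ne_zero_left hb)),
    Nat.factorization_gcd hab hc, Nat.factorization_lcm ha hb,
    Nat.factorization_lcm (Nat.gcd_ne_zero_left ha) (Nat.gcd_ne_zero_left hb),
    Nat.factorization_gcd ha hc, Nat.factorization_gcd hb hc]
  intro p
  simp only [Finsupp.inf_apply, Finsupp.sup_apply, inf_sup_right, le_refl]

theorem Int.natCast_gcd_finsetLcm_dvd {ι : Type*} (n : ι → ℕ) (c : ℕ) {d : ℤ} (S : Finset ι)
    (h : ∀ u ∈ S, (Nat.gcd (n u) c : ℤ) ∣ d) : (Nat.gcd (S.lcm n) c : ℤ) ∣ d := by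
  classical
  induction S using Finset.induction_on with
  | empty => simp
  | insert a S _ ih =>
    rw [Finset.lcm_insert]
    refine (Int.natCast_dvd_natCast.mpr (Nat.gcd_lcm_dvd_lcm_gcd _ _ c)).trans ?_
    rw [Int.natCast_dvd, Nat.lcm_dvd_iff, ← Int.natCast_dvd, ← Int.natCast_dvd]
    simp only [Finset.forall_mem_insert] at h
    exact ⟨h.1, ih h.2⟩

theorem Int.exists_forall_dvd_sub_of_gcd_dvd_sub {ι : Type*} (n : ι → ℕ) (r : ι → ℤ)
    (S : Finset ι) (h : ∀ u ∈ S, ∀ x ∈ S, (Nat.gcd (n u) (n x) : ℤ) ∣ r u - r x) :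
    ∃ z : ℤ, ∀ u ∈ S, (n u : ℤ) ∣ z - r u := by
  classical
  induction S using Finset.induction_on with
  | empty => exact ⟨0, by simp⟩
  | insert a S _ ih =>
    simp only [Finset.forall_mem_insert] at h
    obtain ⟨z₀, hz₀⟩ := ih fun u hu x hx => h.2 u hu |>.2 x hx
    have hgcd : (Nat.gcd (S.lcm n) (n a) : ℤ) ∣ r a - z₀ := by
      refine Int.natCast_gcd_finsetLcm_dvd n (n a) S fun u hu => ?_
      have hua : (Nat.gcd (n u) (n a) : ℤ) ∣ r u - r a := (h.2 u hu).1
      have huz : (Nat.gcd (n u) (n a) : ℤ) ∣ z₀ - r u :=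
        (Int.natCast_dvd_natCast.mpr (Nat.gcd_dvd_left _ _)).trans (hz₀ u hu)
      simpa [dvd_sub_comm] using dvd_add huz hua
    obtain ⟨q, hq⟩ := hgcd
    rw [Nat.gcd_eq_gcd_ab] at hq
    refine ⟨z₀ + S.lcm n * (q * Nat.gcdA (S.lcm n) (n a)), (Finset.forall_mem_insert _ _ _).mpr
      ⟨?_, fun u hu => ?_⟩⟩
    · exact ⟨-(q * Nat.gcdB (S.lcm n) (n a)), by linear_combination -hq⟩
    · rw [add_sub_right_comm]
      exact dvd_add (hz₀ u hu) ((Int.natCast_dvd_natCast.mpr (Finset.dvd_lcm hu)).mul_right _)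

section Collapse

variable {V : Type*} {G : SimpleGraph V} [DecidableRel G.Adj] {w : Sym2 V → ℕ} {v : V}

theorem collapseWeight_dvd_iff {u x : {u : V // u ≠ v}} (hux : (starClique G v).Adj u x) (d : ℤ) :
    (collapseWeight G w v s(u, x) : ℤ) ∣ d ↔ (G.Adj u x → (w s(u, x) : ℤ) ∣ d) ∧
      (G.Adj u v → G.Adj x v → (Nat.gcd (w s(u, v)) (w s(x, v)) : ℤ) ∣ d) := by
  simp only [collapseWeight, Sym2.lift_mk]
  split_ifs with hadj hstar
  · simp [Int.natCast_dvd, Nat.lcm_dvd_iff, hadj, hstar.1, hstar.2]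
  · simp only [hadj, true_implies, iff_self_and]
    exact fun _ hu hx => absurd ⟨hu, hx⟩ hstar
  · have hstar := hux.2.resolve_left hadj
    simp [hadj, hstar.1, hstar.2]

theorem IsSpline.restrict {g : V → ℤ} (hg : IsSpline G w g) :
    IsSpline (starClique G v) (collapseWeight G w v) (fun u => g u) := by
  refine fun u x hux => (collapseWeight_dvd_iff hux _).mpr ⟨hg u x, fun hu hx => ?_⟩
  have hgu := (Int.natCast_dvd_natCast.mpr (Nat.gcd_dvd_left _ (w s(↑x, v)))).trans (hg u v hu)
  have hgx := (Int.natCast_dvd_natCast.mpr (Nat.gcd_dvd_right (w s(↑u, v)) _)).trans (hg x v hx)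
  simpa using dvd_sub hgu hgx

theorem exists_isSpline_restrict_eq [Finite V] {g₀ : {u : V // u ≠ v} → ℤ}
    (hg₀ : IsSpline (starClique G v) (collapseWeight G w v) g₀) :
    ∃ g : V → ℤ, IsSpline G w g ∧ ∀ u : {u : V // u ≠ v}, g u = g₀ u := by
  classical
  have := Fintype.ofFinite V
  obtain ⟨z, hz⟩ := Int.exists_forall_dvd_sub_of_gcd_dvd_sub
    (fun u : {u : V // u ≠ v} => w s(↑u, v)) g₀
    (Finset.univ.filter fun u : {u : V // u ≠ v} => G.Adj u v) <| by
      intro u hu x hx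
      simp only [Finset.mem_filter, Finset.mem_univ, true_and] at hu hx
      obtain rfl | hne := eq_or_ne u x
      · simp
      have hux : (starClique G v).Adj u x := ⟨hne, .inr ⟨hu, hx⟩⟩
      exact ((collapseWeight_dvd_iff hux _).mp (hg₀ u x hux)).2 hu hx
  have hzv : ∀ (b : V) (hb : b ≠ v), G.Adj b v → (w s(b, v) : ℤ) ∣ z - g₀ ⟨b, hb⟩ :=
    fun b hb hbv => hz ⟨b, hb⟩ (by simpa using hbv)
  refine ⟨fun a => if h : a = v then z else g₀ ⟨a, h⟩, ?_, fun u => dif_neg u.2⟩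
  intro a b hab
  by_cases ha : a = v <;> by_cases hb : b = v
  · exact absurd (ha.trans hb.symm) hab.ne
  · subst ha
    simpa [hb, Sym2.eq_swap] using hzv b hb hab.symm
  · subst hb
    simpa [ha, dvd_sub_comm] using hzv a ha hab
  · have hab' : (starClique G v).Adj ⟨a, ha⟩ ⟨b, hb⟩ :=
      ⟨fun h => hab.ne (congrArg Subtype.val h), .inl hab⟩
    simpa [ha, hb] using ((collapseWeight_dvd_iff hab' _).mp (hg₀ _ _ hab')).1 hab

variable (G w v)

def splineRestrict :
    splineSubmodule G w →ₗ[ℤ] splineSubmodule (starClique G v) (collapseWeight G w v) :=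
  LinearMap.codRestrict _ (LinearMap.funLeft ℤ ℤ Subtype.val ∘ₗ (splineSubmodule G w).subtype)
    fun g => IsSpline.restrict g.2

theorem splineRestrict_surjective [Finite V] : Function.Surjective (splineRestrict G w v) := by
  rintro ⟨g₀, hg₀⟩
  obtain ⟨g, hg, hres⟩ := exists_isSpline_restrict_eq hg₀
  exact ⟨⟨g, hg⟩, Subtype.ext (funext hres)⟩

theorem splineRestrict_eq_zero_iff (g : splineSubmodule G w) :
    splineRestrict G w v g = 0 ↔ ∀ u : V, u ≠ v → (g : V → ℤ) u = 0 := by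
  simp only [Subtype.ext_iff, funext_iff, Subtype.forall]
  rfl

end Collapse

theorem restriction_surjective_linearMap_general {V : Type*} [Fintype V]
    (G : SimpleGraph V) [DecidableRel G.Adj] (w : Sym2 V → ℕ) (v : V) :
    ∃ φ : splineSubmodule G w →ₗ[ℤ]
        splineSubmodule (starClique G v) (collapseWeight G w v),
      (∀ g : splineSubmodule G w, ∀ u : {u : V // u ≠ v},
        ((φ g : {u : V // u ≠ v} → ℤ) u = (g : V → ℤ) ↑u)) ∧
      Function.Surjective φ ∧
      (∀ g : splineSubmodule G w, φ g = 0 ↔ ∀ u : V, u ≠ v → (g : V → ℤ) u = 0) :=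
  ⟨splineRestrict G w v, fun _ _ => rfl, splineRestrict_surjective G w v,
    splineRestrict_eq_zero_iff G w v⟩

/-- The restriction map `φ : S_G → S_{G_v}`, `φ g = g|_{V \ {v}}`, is a well-defined surjective
ℤ-module homomorphism whose kernel is `{ g ∈ S_G : g u = 0 for all u ≠ v }`. -/
theorem restriction_surjective_linearMap {V : Type*} [Fintype V] [DecidableEq V]
    (G : SimpleGraph V) [DecidableRel G.Adj] (w : Sym2 V → ℕ)
    (hw : ∀ e ∈ G.edgeSet, 0 < w e) (v : V) :
    ∃ φ : splineSubmodule G w →ₗ[ℤ]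
        splineSubmodule (starClique G v) (collapseWeight G w v),
      (∀ g : splineSubmodule G w, ∀ u : {u : V // u ≠ v},
        ((φ g : {u : V // u ≠ v} → ℤ) u = (g : V → ℤ) ↑u)) ∧
      Function.Surjective φ ∧
      (∀ g : splineSubmodule G w, φ g = 0 ↔ ∀ u : V, u ≠ v → (g : V → ℤ) u = 0) :=
  restriction_surjective_linearMap_general G w v
end

section
/- Let (G, w) be an edge-weighted simple graph on vertices enumerated v_1, …, v_n, let v = v_n, and let φ : S_G → S_{G_v} be the restriction map g ↦ g|_{V \ {v_n}}. Fix 0 ≤ i ≤ n − 2 and let F ∈ F_i. Then F is a minimal element of the flow-up class F_i of S_G if and only if φ(F) is a minimal element of the flow-up class F′_i of S_{G_v}; moreover the leading terms agree: F(v_{i+1}) = (φ(F))(v_{i+1}). -/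
/-- `F` is a minimal element of the flow-up class determined by the set `low` of earlier
vertices and the leading vertex `vi`: `F` is a spline vanishing on `low` with `F vi ≠ 0`,
its leading term `F vi` is positive, and `F vi ≤ |g vi|` for every member `g` of the class. -/
def MinimalInFlowup {V : Type*} (G : SimpleGraph V) (w : Sym2 V → ℕ)
    (low : Set V) (vi : V) (F : V → ℤ) : Prop :=
  (IsSpline G w F ∧ (∀ u ∈ low, F u = 0) ∧ F vi ≠ 0) ∧
  0 < F vi ∧
  ∀ g : V → ℤ, IsSpline G w g → (∀ u ∈ low, g u = 0) → g vi ≠ 0 → F vi ≤ |g vi|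


/-!
Restriction to `V \ {v}` maps `S_G` onto `S_{G_v}`. It lands in `S_{G_v}` because two neighbours
`u, x` of `v` have values congruent modulo `gcd (w {u, v}) (w {x, v})`. It is onto because
extending `g'` to `v` means solving `g v ≡ g' u [mod w {u, v}]` for all neighbours `u` of `v`, and
the edges of the clique on those neighbours say exactly that these congruences are pairwise
compatible; over `ℤ` pairwise compatible congruences are jointly solvable, since `gcd` distributes
over `lcm`. As `v = v_n` comes after `v_1, …, v_{i+1}`, restriction is then a surjection of the
flow-up class `F_i` onto `F'_i` preserving the leading term, so it preserves minimality both ways.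
-/

theorem Nat.gcd_lcm_dvd_lcm_gcd_s15 (a b k : ℕ) : gcd (lcm a b) k ∣ lcm (gcd a k) (gcd b k) := by
  rcases eq_or_ne a 0 with rfl | ha
  · simpa using Nat.dvd_lcm_left _ _
  rcases eq_or_ne b 0 with rfl | hb
  · simpa using Nat.dvd_lcm_right _ _
  rcases eq_or_ne k 0 with rfl | hk
  · simp
  rw [← Nat.factorization_le_iff_dvd (Nat.gcd_ne_zero_right hk)
      (Nat.lcm_ne_zero (Nat.gcd_ne_zero_right hk) (Nat.gcd_ne_zero_right hk)),
    Nat.factorization_gcd (Nat.lcm_ne_zero ha hb) hk, Nat.factorization_lcm ha hb,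
    Nat.factorization_lcm (Nat.gcd_ne_zero_right hk) (Nat.gcd_ne_zero_right hk),
    Nat.factorization_gcd ha hk, Nat.factorization_gcd hb hk]
  intro p
  exact (min_max_distrib_right _ _ _).le

theorem Nat.gcd_finset_lcm_dvd {ι : Type*} (s : Finset ι) (m : ι → ℕ) (k : ℕ) :
    gcd (s.lcm m) k ∣ s.lcm (fun u => gcd (m u) k) := by
  classical
  induction s using Finset.induction_on with
  | empty => simp
  | insert u s _ ih =>
    rw [Finset.lcm_insert, Finset.lcm_insert]
    exact (Nat.gcd_lcm_dvd_lcm_gcd_s15 _ _ _).trans (lcm_dvd_lcm dvd_rfl ih)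

theorem Int.natCast_finset_lcm_dvd {ι : Type*} {s : Finset ι} {m : ι → ℕ} {d : ℤ}
    (h : ∀ u ∈ s, (m u : ℤ) ∣ d) : ((s.lcm m : ℕ) : ℤ) ∣ d := by
  rw [Int.natCast_dvd, Finset.lcm_dvd_iff]
  exact fun u hu => Int.natCast_dvd.mp (h u hu)

theorem Int.exists_dvd_sub_and_dvd_sub {m n : ℕ} {a b : ℤ} (h : (Nat.gcd m n : ℤ) ∣ a - b) :
    ∃ z : ℤ, (m : ℤ) ∣ z - a ∧ (n : ℤ) ∣ z - b := by
  obtain ⟨k, hk⟩ := h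
  have bezout : (Nat.gcd m n : ℤ) = m * Int.gcdA m n + n * Int.gcdB m n := by
    simpa using Int.gcd_eq_gcd_ab (m : ℤ) n
  refine ⟨a - m * Int.gcdA m n * k, ⟨-(Int.gcdA m n * k), by ring⟩, ⟨Int.gcdB m n * k, ?_⟩⟩
  linear_combination hk + k * bezout

theorem Int.exists_forall_dvd_sub {ι : Type*} (s : Finset ι) (m : ι → ℕ) (a : ι → ℤ)
    (h : ∀ u ∈ s, ∀ x ∈ s, (Nat.gcd (m u) (m x) : ℤ) ∣ a u - a x) :
    ∃ z : ℤ, ∀ u ∈ s, (m u : ℤ) ∣ z - a u := by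
  classical
  induction s using Finset.induction_on with
  | empty => exact ⟨0, by simp⟩
  | insert u₀ s _ ih =>
    obtain ⟨z₀, hz₀⟩ := ih fun u hu x hx =>
      h u (Finset.mem_insert_of_mem hu) x (Finset.mem_insert_of_mem hx)
    have compatible : (Nat.gcd (s.lcm m) (m u₀) : ℤ) ∣ z₀ - a u₀ := by
      refine (Int.natCast_dvd_natCast.mpr (Nat.gcd_finset_lcm_dvd s m (m u₀))).trans
        (Int.natCast_finset_lcm_dvd fun u hu => ?_)
      have h₁ := (Int.natCast_dvd_natCast.mpr (Nat.gcd_dvd_left (m u) (m u₀))).trans (hz₀ u hu)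
      have h₂ := h u (Finset.mem_insert_of_mem hu) u₀ (Finset.mem_insert_self _ _)
      simpa using dvd_add h₁ h₂
    obtain ⟨z, hzL, hzu₀⟩ := Int.exists_dvd_sub_and_dvd_sub compatible
    refine ⟨z, fun u hu => ?_⟩
    rcases Finset.mem_insert.mp hu with rfl | hu
    · exact hzu₀
    · have hmL := (Int.natCast_dvd_natCast.mpr (Finset.dvd_lcm hu)).trans hzL
      simpa using dvd_add hmL (hz₀ u hu)

theorem collapseWeight_mk {V : Type*} (G : SimpleGraph V) [DecidableRel G.Adj]
    (w : Sym2 V → ℕ) (v : V) (u x : {u : V // u ≠ v}) :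
    collapseWeight G w v s(u, x) =
      if G.Adj u x then
        if G.Adj u v ∧ G.Adj x v then Nat.lcm (w s(u, x)) (Nat.gcd (w s(u, v)) (w s(x, v)))
        else w s(u, x)
      else Nat.gcd (w s(u, v)) (w s(x, v)) :=
  rfl

namespace IsSpline

variable {V : Type*} {G : SimpleGraph V} {w : Sym2 V → ℕ}

theorem gcd_dvd_sub {F : V → ℤ} (hF : IsSpline G w F) {u x v : V} (hu : G.Adj u v)
    (hx : G.Adj x v) : (Nat.gcd (w s(u, v)) (w s(x, v)) : ℤ) ∣ F u - F x := by
  have h₁ := (Int.natCast_dvd_natCast.mpr (Nat.gcd_dvd_left (w s(u, v)) (w s(x, v)))).trans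
    (hF u v hu)
  have h₂ := (Int.natCast_dvd_natCast.mpr (Nat.gcd_dvd_right (w s(u, v)) (w s(x, v)))).trans
    (hF x v hx)
  simpa using dvd_sub h₁ h₂

variable [DecidableRel G.Adj] {v : V}

theorem restrict_s15 {F : V → ℤ} (hF : IsSpline G w F) :
    IsSpline (starClique G v) (collapseWeight G w v) (fun u => F u) := by
  rintro u x ⟨-, hux⟩
  rw [collapseWeight_mk]
  split_ifs with hG hv
  · rw [Int.natCast_dvd, Nat.lcm_dvd_iff, ← Int.natCast_dvd, ← Int.natCast_dvd]
    exact ⟨hF _ _ hG, hF.gcd_dvd_sub hv.1 hv.2⟩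
  · exact hF _ _ hG
  · obtain ⟨hu, hx⟩ := hux.resolve_left hG
    exact hF.gcd_dvd_sub hu hx

theorem dvd_sub_of_starClique {g' : {u : V // u ≠ v} → ℤ}
    (hg' : IsSpline (starClique G v) (collapseWeight G w v) g') {u x : {u : V // u ≠ v}}
    (hux : G.Adj u x) : (w s(↑u, ↑x) : ℤ) ∣ g' u - g' x := by
  have h := hg' u x ⟨fun h => hux.ne (congrArg Subtype.val h), Or.inl hux⟩
  rw [collapseWeight_mk, if_pos hux] at h
  split_ifs at h
  · exact (Int.natCast_dvd_natCast.mpr (Nat.dvd_lcm_left _ _)).trans h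
  · exact h

theorem gcd_dvd_sub_of_starClique {g' : {u : V // u ≠ v} → ℤ}
    (hg' : IsSpline (starClique G v) (collapseWeight G w v) g') {u x : {u : V // u ≠ v}}
    (hu : G.Adj u v) (hx : G.Adj x v) :
    (Nat.gcd (w s(↑u, v)) (w s(↑x, v)) : ℤ) ∣ g' u - g' x := by
  obtain rfl | hne := eq_or_ne u x
  · simp
  have h := hg' u x ⟨hne, Or.inr ⟨hu, hx⟩⟩
  rw [collapseWeight_mk] at h
  by_cases hux : G.Adj (u : V) x
  · rw [if_pos hux, if_pos ⟨hu, hx⟩] at h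
    exact (Int.natCast_dvd_natCast.mpr (Nat.dvd_lcm_right _ _)).trans h
  · rwa [if_neg hux] at h

theorem exists_extend [Fintype V] [DecidableEq V] {g' : {u : V // u ≠ v} → ℤ}
    (hg' : IsSpline (starClique G v) (collapseWeight G w v) g') :
    ∃ g : V → ℤ, IsSpline G w g ∧ (fun u : {u : V // u ≠ v} => g u) = g' := by
  obtain ⟨z, hz⟩ := Int.exists_forall_dvd_sub
    {u : {u : V // u ≠ v} | G.Adj u v} (fun u => w s(↑u, v)) g'
    fun u hu x hx => hg'.gcd_dvd_sub_of_starClique (Finset.mem_filter.mp hu).2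
      (Finset.mem_filter.mp hx).2
  refine ⟨fun u => if h : u = v then z else g' ⟨u, h⟩, fun p q hpq => ?_,
    funext fun u => dif_neg u.2⟩
  by_cases hp : p = v
  · subst hp
    have hq := hpq.ne.symm
    simpa [hq, Sym2.eq_swap] using hz ⟨q, hq⟩ (by simpa using hpq.symm)
  by_cases hq : q = v
  · subst hq
    simpa [hp, dvd_sub_comm] using hz ⟨p, hp⟩ (by simpa using hpq)
  simpa [hp, hq] using hg'.dvd_sub_of_starClique (u := ⟨p, hp⟩) (x := ⟨q, hq⟩) hpq

end IsSpline

theorem minimalInFlowup_iff_restrict {V : Type*} [Fintype V] [DecidableEq V]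
    {G : SimpleGraph V} [DecidableRel G.Adj] {w : Sym2 V → ℕ} {v : V} {low : Set V}
    (hv : v ∉ low) {vi : V} (hvi : vi ≠ v) {F : V → ℤ} (hF : IsSpline G w F) :
    MinimalInFlowup G w low vi F ↔
      MinimalInFlowup (starClique G v) (collapseWeight G w v) (Subtype.val ⁻¹' low) ⟨vi, hvi⟩
        (fun u => F u) := by
  constructor
  · rintro ⟨⟨-, hlow, hne⟩, hpos, hmin⟩
    refine ⟨⟨hF.restrict_s15, fun u hu => hlow u hu, hne⟩, hpos, fun g' hg' hg'low hg'ne => ?_⟩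
    obtain ⟨g, hg, rfl⟩ := hg'.exists_extend
    exact hmin g hg (fun u hu => hg'low ⟨u, ne_of_mem_of_not_mem hu hv⟩ hu) hg'ne
  · rintro ⟨⟨-, hlow, hne⟩, hpos, hmin⟩
    refine ⟨⟨hF, fun u hu => hlow ⟨u, ne_of_mem_of_not_mem hu hv⟩ hu, hne⟩, hpos,
      fun g hg hglow hgne => hmin _ hg.restrict_s15 (fun u hu => hglow u hu) hgne⟩

/-- Let `φ : S_G → S_{G_v}` be restriction at `v = v_{n+1} = Fin.last n`, and let `F` lie in
the flow-up class `F_i` of `S_G` (`0 ≤ i ≤ (n+1) - 2`).  Then `F` is a minimal element of `F_i`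
iff `φ F` is a minimal element of the flow-up class `F'_i` of `S_{G_v}`, and the leading terms
agree: `F v_{i+1} = (φ F) v_{i+1}`. -/
theorem restriction_minimal_iff (n : ℕ) (hn : 1 ≤ n) (G : SimpleGraph (Fin (n + 1)))
    [DecidableRel G.Adj] (w : Sym2 (Fin (n + 1)) → ℕ)
    (i : ℕ) (hi : i ≤ n - 1)
    (F : Fin (n + 1) → ℤ) (hF : IsSpline G w F) :
    F ⟨i, by omega⟩ =
      (fun u : {u : Fin (n + 1) // u ≠ Fin.last n} => F ↑u)
        ⟨⟨i, by omega⟩, by simp [Fin.ext_iff]; omega⟩ ∧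
    (MinimalInFlowup G w {j : Fin (n + 1) | (j : ℕ) < i} ⟨i, by omega⟩ F ↔
      MinimalInFlowup (starClique G (Fin.last n)) (collapseWeight G w (Fin.last n))
        {u : {u : Fin (n + 1) // u ≠ Fin.last n} | ((u : Fin (n + 1)) : ℕ) < i}
        ⟨⟨i, by omega⟩, by simp [Fin.ext_iff]; omega⟩
        (fun u : {u : Fin (n + 1) // u ≠ Fin.last n} => F ↑u)) := by
  have hlast : Fin.last n ∉ {j : Fin (n + 1) | (j : ℕ) < i} := by
    simp only [Set.mem_ofPred_eq, Fin.val_last]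
    omega
  exact ⟨rfl, minimalInFlowup_iff_restrict hlast _ hF⟩
end
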